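/- arXiv:2603.05300 — 2 statements merged into one kernel-verified Lean document; each statement's English description precedes it below -/
import Mathlib

section
/- Let u be an even integer, and suppose a single particle-motion process ppm_u^{(m)} is applied to a generalised frequency sequence θ with (θ_u, θ_{u+1}) = (h, 0), h > 0, and θ_i + θ_{i+1} ≤ h for all i ≥ u, producing θ'. Then: every odd index i has θ_i even and m is even, if and only if every odd index i has θ'_i even. -/
/-- The particle-motion process: `PPM (f, u) m (g, v)` means that starting from the
generalised frequency sequence `f` with focus at index `u`, after exactly `m` particle
motions (interleaved with the forced focus shifts) the process stops at the sequence `g`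
with focus at index `v`.  With `h := f_w + f_{w+1}` the invariant sum of the focused pair:
if `f_{w+1} + f_{w+2} = h` the focus shifts to `w+1` (no motion); if `f_{w+1} + f_{w+2} < h`
the pair `(f_w, f_{w+1})` becomes `(f_w - 1, f_{w+1} + 1)` (one motion).  The process stops
immediately after the `m`-th motion (or at once if `m = 0`). -/
inductive PPM : ((ℤ → ℕ) × ℤ) → ℕ → ((ℤ → ℕ) × ℤ) → Prop
  | zero (f : ℤ → ℕ) (w : ℤ) : PPM (f, w) 0 (f, w)
  | shift {f : ℤ → ℕ} {w : ℤ} {m : ℕ} {t : (ℤ → ℕ) × ℤ} (hm : 0 < m)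
      (hcond : f (w+1) + f (w+2) = f w + f (w+1))
      (h : PPM (f, w+1) m t) : PPM (f, w) m t
  | motion {f : ℤ → ℕ} {w : ℤ} {m : ℕ} {t : (ℤ → ℕ) × ℤ}
      (hcond : f (w+1) + f (w+2) < f w + f (w+1))
      (h : PPM (Function.update (Function.update f w (f w - 1)) (w+1) (f (w+1) + 1), w) m t) :
      PPM (f, w) (m+1) t

/-! A particle motion at focus `w` changes `f_w` and `f_{w+1}` by one, so it flips the parity
of the frequency at the odd index among `w, w+1` and nowhere else. A focus shift from `w` to
`w+1` keeps that odd index when `w` is even; when `w` is odd it moves it from `w` to `w+2`,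
but then `f_{w+2} = f_w` by the shift condition. Hence "all odd indices carry even frequencies"
holds at the end exactly when it holds before, up to the odd slot of the initial focus, whose
frequency plus the number of motions must be even. For `u` even that slot is `u+1`, where
`θ_{u+1} = 0`. -/

def oddSlot (w : ℤ) : ℤ := if Even w then w + 1 else w

lemma oddSlot_of_even {w : ℤ} (hw : Even w) : oddSlot w = w + 1 := if_pos hw

lemma oddSlot_of_odd {w : ℤ} (hw : Odd w) : oddSlot w = w := if_neg (Int.not_even_iff_odd.mpr hw)

lemma odd_oddSlot (w : ℤ) : Odd (oddSlot w) := by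
  rcases Int.even_or_odd w with hw | hw
  · rw [oddSlot_of_even hw]; exact hw.add_one
  · rwa [oddSlot_of_odd hw]

lemma eq_oddSlot_of_odd {w i : ℤ} (hi : Odd i) (hiw : i = w ∨ i = w + 1) : i = oddSlot w := by
  rcases Int.even_or_odd w with hw | hw
  · rw [oddSlot_of_even hw]
    rcases hiw with rfl | rfl
    · exact absurd hw (Int.not_even_iff_odd.mpr hi)
    · rfl
  · rw [oddSlot_of_odd hw]
    rcases hiw with rfl | rfl
    · rfl
    · exact absurd hi (Int.not_odd_iff_even.mpr hw.add_one)

def moveParticle (f : ℤ → ℕ) (w : ℤ) : ℤ → ℕ :=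
  Function.update (Function.update f w (f w - 1)) (w + 1) (f (w + 1) + 1)

lemma moveParticle_apply_of_ne {f : ℤ → ℕ} {w i : ℤ} (h₀ : i ≠ w) (h₁ : i ≠ w + 1) :
    moveParticle f w i = f i := by
  rw [moveParticle, Function.update_of_ne h₁, Function.update_of_ne h₀]

lemma even_moveParticle_oddSlot_add_iff {f : ℤ → ℕ} {w : ℤ} (hw : 0 < f w) (m : ℕ) :
    Even (moveParticle f w (oddSlot w) + m) ↔ Even (f (oddSlot w) + (m + 1)) := by
  rcases Int.even_or_odd w with he | ho
  · rw [oddSlot_of_even he, moveParticle, Function.update_self, add_assoc, add_comm 1 m]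
  · rw [oddSlot_of_odd ho, moveParticle, Function.update_of_ne (by omega), Function.update_self]
    simp only [Nat.even_iff]
    omega

lemma forall_odd_even_iff {f : ℤ → ℕ} {j : ℤ} (hj : Odd j) :
    (∀ i, Odd i → Even (f i)) ↔ (∀ i, Odd i → i ≠ j → Even (f i)) ∧ Even (f j) :=
  ⟨fun H => ⟨fun i hi _ => H i hi, H j hj⟩, fun ⟨H, hfj⟩ i hi =>
    if hij : i = j then hij ▸ hfj else H i hi hij⟩

lemma forall_odd_ne_even_congr {f g : ℤ → ℕ} {j : ℤ} (hfg : ∀ i, Odd i → i ≠ j → f i = g i) :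
    (∀ i, Odd i → i ≠ j → Even (f i)) ↔ (∀ i, Odd i → i ≠ j → Even (g i)) :=
  forall_congr' fun i => imp_congr_right fun hi => imp_congr_right fun hij => by rw [hfg i hi hij]

/-- Once the excluded odd index carries the same frequency as another odd index, the
condition there is implied by the condition at the other one. -/
lemma forall_odd_ne_even_of_eq {f : ℤ → ℕ} {a b : ℤ} (hb : Odd b) (hab : f a = f b)
    (H : ∀ i, Odd i → i ≠ a → Even (f i)) : ∀ i, Odd i → i ≠ b → Even (f i) := by
  intro i hi hib
  by_cases hia : i = a
  · rw [hia, hab]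
    exact H b hb fun hba => hib (hia.trans hba.symm)
  · exact H i hi hia

lemma forall_odd_ne_even_congr_of_eq {f : ℤ → ℕ} {a b : ℤ} (ha : Odd a) (hb : Odd b)
    (hab : f a = f b) :
    (∀ i, Odd i → i ≠ a → Even (f i)) ↔ (∀ i, Odd i → i ≠ b → Even (f i)) :=
  ⟨forall_odd_ne_even_of_eq hb hab, forall_odd_ne_even_of_eq ha hab.symm⟩

theorem PPM.forall_odd_even_iff {s t : (ℤ → ℕ) × ℤ} {m : ℕ} (hp : PPM s m t) :
    (∀ i, Odd i → Even (t.1 i)) ↔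
      (∀ i, Odd i → i ≠ oddSlot s.2 → Even (s.1 i)) ∧ Even (s.1 (oddSlot s.2) + m) := by
  induction hp with
  | zero f w => exact _root_.forall_odd_even_iff (odd_oddSlot w)
  | @shift f w m t _ hcond _ ih =>
    rw [ih]
    dsimp only
    rcases Int.even_or_odd w with hw | hw
    · rw [oddSlot_of_even hw, oddSlot_of_odd hw.add_one]
    · have hshift : f (w + 2) = f w := by omega
      rw [oddSlot_of_odd hw, oddSlot_of_even hw.add_one, add_assoc, one_add_one_eq_two, hshift,
        forall_odd_ne_even_congr_of_eq (hw.add_even even_two) hw hshift]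
  | @motion f w m t hcond _ ih =>
    have hfw : 0 < f w := by omega
    rw [ih]
    change (∀ i, Odd i → i ≠ oddSlot w → Even (moveParticle f w i)) ∧
      Even (moveParticle f w (oddSlot w) + m) ↔ _
    rw [even_moveParticle_oddSlot_add_iff hfw]
    refine and_congr_left' (forall_odd_ne_even_congr fun i hi hiw => ?_)
    have hi : i ≠ w ∧ i ≠ w + 1 := by
      constructor <;> rintro rfl <;> exact hiw (eq_oddSlot_of_odd hi (by simp))
    exact moveParticle_apply_of_ne hi.1 hi.2

theorem stmt4_general (θ : ℤ → ℕ) (u : ℤ) (hu : Even u)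
    (m : ℕ) (h1 : θ (u+1) = 0)
    (θ' : ℤ → ℕ) (v : ℤ) (hppm : PPM (θ, u) m (θ', v)) :
    ((∀ i : ℤ, Odd i → Even (θ i)) ∧ Even m) ↔ (∀ i : ℤ, Odd i → Even (θ' i)) := by
  rw [hppm.forall_odd_even_iff, forall_odd_even_iff hu.add_one]
  dsimp only
  rw [oddSlot_of_even hu, h1, zero_add, and_right_comm]
  exact and_iff_left Even.zero

/-- Parity preservation for particle motion at an even focus `u`: if
`(θ_u, θ_{u+1}) = (h, 0)` with `h > 0` and `θ_i + θ_{i+1} ≤ h` for `i ≥ u`, and `θ'`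
is the result of `ppm_u^{(m)}`, then: every odd index carries an even frequency in `θ`
and `m` is even, if and only if every odd index carries an even frequency in `θ'`. -/
theorem stmt4 (θ : ℤ → ℕ) (hfin : (Function.support θ).Finite) (u : ℤ) (hu : Even u)
    (h m : ℕ) (hh : 0 < h) (h0 : θ u = h) (h1 : θ (u+1) = 0)
    (hbd : ∀ i, u ≤ i → θ i + θ (i+1) ≤ h)
    (θ' : ℤ → ℕ) (v : ℤ) (hppm : PPM (θ, u) m (θ', v)) :
    ((∀ i : ℤ, Odd i → Even (θ i)) ∧ Even m) ↔ (∀ i : ℤ, Odd i → Even (θ' i)) :=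
  stmt4_general θ u hu m h1 θ' v hppm
end

section
/- Suppose that, for each pair of integers (k, c) with 0 ≤ c ≤ k, the formal power series identity Σ_{f ∈ W̄_{k,c}} q^{|f|} = (-q²;q²)_∞ (q^{2⌊(c+2)/2⌋}, q^{2k+4-2⌊(c+2)/2⌋}, q^{2k+4}; q^{2k+4})_∞ / (q²;q²)_∞ holds, where W̄_{k,c} is the set of frequency sequences f : ℤ_{>0} → ℕ with finite support satisfying f_i + f_{i+1} ≤ k for all i ≥ 1, f_1 ≤ c, and f_i even for all odd i. Then for non-negative integers j, r, k with j + r ≤ k, the generating function for the set Y^o_{j,r,k} of frequency sequences f : ℤ_{≥0} → ℕ with finite support satisfying f_i + f_{i+1} ≤ k for all i ≥ 0, f_0 ∈ {ℓ + max{ℓ-(j-r), 0} : 0 ≤ ℓ ≤ j}, and f_i even for all odd i, equals Σ_{s=0}^{j} (-q²;q²)_∞ (q^{2⌊(k+2-r+j-2s)/2⌋}, q^{2k+4-2⌊(k+2-r+j-2s)/2⌋}, q^{2k+4}; q^{2k+4})_∞ / (q²;q²)_∞. -/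
/-- `(q^a; q^r)_∞ = ∏_{i ≥ 0} (1 - q^{a + r i})` as a formal power series (for
`a, r ≥ 1` the `n`-th coefficient of the infinite product is that of the truncated
product over `i < n + 1`, which has stabilised). -/
noncomputable def qpochM (a r : ℕ) : PowerSeries ℚ :=
  PowerSeries.mk fun n => PowerSeries.coeff (R := ℚ) n
    (∏ i ∈ Finset.range (n+1), (1 - (PowerSeries.X : PowerSeries ℚ) ^ (a + r*i)))

/-- `(-q^a; q^r)_∞ = ∏_{i ≥ 0} (1 + q^{a + r i})` as a formal power series. -/
noncomputable def qpochP (a r : ℕ) : PowerSeries ℚ :=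
  PowerSeries.mk fun n => PowerSeries.coeff (R := ℚ) n
    (∏ i ∈ Finset.range (n+1), (1 + (PowerSeries.X : PowerSeries ℚ) ^ (a + r*i)))

/-- The generating function of a set of frequency sequences: the coefficient of `qⁿ` is
the number of its elements of weight `n` (parts of size `0` contribute nothing). -/
noncomputable def GF (S : Set (ℤ → ℕ)) : PowerSeries ℚ :=
  PowerSeries.mk fun n =>
    (Nat.card {f : ℤ → ℕ // f ∈ S ∧ ∑ᶠ i : ℤ, i * (f i : ℤ) = (n : ℤ)} : ℚ)

/-- `W̄_{k,c}`: frequency sequences on `ℤ_{>0}` with finite support, `f_i + f_{i+1} ≤ k`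
for `i ≥ 1`, `f_1 ≤ c`, and `f_i` even for every odd `i`. -/
def WbarSet (k c : ℕ) : Set (ℤ → ℕ) :=
  {f | (Function.support f).Finite ∧ (∀ i : ℤ, i ≤ 0 → f i = 0) ∧
    (∀ i : ℤ, 1 ≤ i → f i + f (i+1) ≤ k) ∧ f 1 ≤ c ∧
    ∀ i : ℤ, Odd i → Even (f i)}

/-- `Y^o_{j,r,k}`: frequency sequences on `ℤ_{≥0}` with finite support,
`f_i + f_{i+1} ≤ k` for `i ≥ 0`, `f_0 ∈ {ℓ + max{ℓ-(j-r),0} : 0 ≤ ℓ ≤ j}`, and `f_i`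
even for every odd `i`. -/
def YoSet (j r k : ℕ) : Set (ℤ → ℕ) :=
  {f | (Function.support f).Finite ∧ (∀ i : ℤ, i < 0 → f i = 0) ∧
    (∀ i : ℤ, 0 ≤ i → f i + f (i+1) ≤ k) ∧
    (∃ l : ℕ, l ≤ j ∧ (f 0 : ℤ) = (l : ℤ) + max ((l : ℤ) - ((j : ℤ) - (r : ℤ))) 0) ∧
    ∀ i : ℤ, Odd i → Even (f i)}

/-- The product side `(-q²;q²)_∞ (q^e, q^{2k+4-e}, q^{2k+4}; q^{2k+4})_∞ / (q²;q²)_∞`. -/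
noncomputable def prodSide (k e : ℕ) : PowerSeries ℚ :=
  qpochP 2 2 * qpochM e (2*k+4) * qpochM (2*k+4-e) (2*k+4) * qpochM (2*k+4) (2*k+4)
    * (qpochM 2 2)⁻¹

/-!
Sort the elements of `Y^o_{j,r,k}` by the multiplicity `c = ℓ + max(ℓ - (j - r), 0)` of the
part `0`. Deleting the zero parts maps those with `f_0 = c` weight-preservingly onto `W̄_{k,k-c}`,
so the generating function is the sum over `ℓ ≤ j` of the product side with exponent
`2⌊(k - c + 2)/2⌋`. The product side is invariant under `e ↦ 2k + 4 - e`, and this symmetry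
matches these exponents with those of the claimed sum.
-/

open Function Finset

noncomputable def weight (f : ℤ → ℕ) : ℤ := ∑ᶠ i, i * (f i : ℤ)

lemma coeff_GF (S : Set (ℤ → ℕ)) (n : ℕ) :
    PowerSeries.coeff n (GF S) = ({f | f ∈ S ∧ weight f = n}.ncard : ℚ) := by
  rw [GF, PowerSeries.coeff_mk, ← Nat.card_coe_set_eq]
  rfl

lemma GF_congr_of_bijOn {S T : Set (ℤ → ℕ)} (φ : (ℤ → ℕ) → ℤ → ℕ) (hφ : Set.BijOn φ S T)
    (hw : ∀ f ∈ S, weight (φ f) = weight f) : GF S = GF T := by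
  ext n
  rw [coeff_GF, coeff_GF]
  congr 1
  refine Set.BijOn.ncard_eq ⟨fun f ⟨hf, hfn⟩ => ⟨hφ.mapsTo hf, (hw f hf).trans hfn⟩,
    hφ.injOn.mono fun f hf => hf.1, fun g ⟨hg, hgn⟩ => ?_⟩
  obtain ⟨f, hf, rfl⟩ := hφ.surjOn hg
  exact ⟨f, ⟨hf, (hw f hf).symm.trans hgn⟩, rfl⟩

lemma GF_biUnion {ι : Type*} (s : Finset ι) (T : ι → Set (ℤ → ℕ))
    (hT : (s : Set ι).PairwiseDisjoint T)
    (hfin : ∀ i ∈ s, ∀ n : ℕ, {f | f ∈ T i ∧ weight f = n}.Finite) :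
    GF (⋃ i ∈ s, T i) = ∑ i ∈ s, GF (T i) := by
  ext n
  have hslice : {f | f ∈ ⋃ i ∈ s, T i ∧ weight f = n}
      = ⋃ i ∈ (s : Set ι), {f | f ∈ T i ∧ weight f = n} :=
    Set.iUnion₂_inter _ _
  rw [map_sum, coeff_GF, hslice, s.finite_toSet.ncard_biUnion (fun i hi => hfin i hi n)
    (hT.mono fun i => Set.sep_subset _ _), finsum_mem_coe_finset]
  simp [coeff_GF]

lemma weight_update_zero (f : ℤ → ℕ) (c : ℕ) : weight (update f 0 c) = weight f := by
  refine finsum_congr fun i => ?_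
  rcases eq_or_ne i 0 with rfl | hi
  · simp
  · rw [update_of_ne hi]

lemma mul_le_weight {f : ℤ → ℕ} (hfin : (support f).Finite) (hneg : ∀ i < 0, f i = 0) (i : ℤ) :
    i * f i ≤ weight f := by
  refine single_le_finsum (f := fun x => x * (f x : ℤ)) i (hfin.subset fun x hx => ?_) fun x => ?_
  · exact (by simpa using hx : x ≠ 0 ∧ f x ≠ 0).2
  · rcases lt_or_ge x 0 with hx | hx
    · simp [hneg x hx]
    · positivity

lemma eq_zero_of_weight_lt {f : ℤ → ℕ} (hfin : (support f).Finite) (hneg : ∀ i < 0, f i = 0)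
    {i : ℤ} (hi : weight f < i) : f i = 0 := by
  rcases lt_or_ge i 0 with hi0 | hi0
  · exact hneg i hi0
  have hle := mul_le_weight hfin hneg i
  by_contra hfi
  have : (1 : ℤ) ≤ f i := by exact_mod_cast Nat.one_le_iff_ne_zero.2 hfi
  nlinarith

lemma finite_weight_slice {S : Set (ℤ → ℕ)} (k n : ℕ)
    (hS : ∀ f ∈ S, (support f).Finite ∧ (∀ i < 0, f i = 0) ∧ ∀ i, f i ≤ k) :
    {f | f ∈ S ∧ weight f = n}.Finite := by
  let restrict : (ℤ → ℕ) → Set.Icc (0 : ℤ) n → ℕ := fun f i => f i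
  have hpi : (Set.univ.pi fun _ : Set.Icc (0 : ℤ) n => Set.Iic k).Finite :=
    Set.Finite.pi fun _ => Set.finite_Iic k
  refine Set.Finite.of_finite_image (f := restrict) (hpi.subset ?_) ?_
  · rintro _ ⟨f, ⟨hf, -⟩, rfl⟩ i -
    exact (hS f hf).2.2 i
  · rintro f ⟨hf, hfn⟩ g ⟨hg, hgn⟩ hfg
    obtain ⟨hffin, hfneg, -⟩ := hS f hf
    obtain ⟨hgfin, hgneg, -⟩ := hS g hg
    funext i
    rcases lt_or_ge i 0 with hi | hi
    · rw [hfneg i hi, hgneg i hi]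
    rcases le_or_gt i n with hin | hin
    · exact congrFun hfg ⟨i, hi, hin⟩
    · rw [eq_zero_of_weight_lt hffin hfneg (hfn ▸ hin),
        eq_zero_of_weight_lt hgfin hgneg (hgn ▸ hin)]

def YSet (k : ℕ) : Set (ℤ → ℕ) :=
  {f | (support f).Finite ∧ (∀ i : ℤ, i < 0 → f i = 0) ∧
    (∀ i : ℤ, 0 ≤ i → f i + f (i+1) ≤ k) ∧ ∀ i : ℤ, Odd i → Even (f i)}

lemma le_of_mem_YSet {k : ℕ} {f : ℤ → ℕ} (hf : f ∈ YSet k) (i : ℤ) : f i ≤ k := by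
  rcases lt_or_ge i 0 with hi | hi
  · simp [hf.2.1 i hi]
  · have := hf.2.2.1 i hi
    omega

lemma finite_weight_slice_YSet_fiber (k c n : ℕ) :
    {f | f ∈ {f | f ∈ YSet k ∧ f 0 = c} ∧ weight f = n}.Finite :=
  finite_weight_slice k n fun _ ⟨hf, _⟩ => ⟨hf.1, hf.2.1, le_of_mem_YSet hf⟩

lemma update_zero_mem_WbarSet {k c : ℕ} {f : ℤ → ℕ} (hf : f ∈ YSet k) (hf0 : f 0 = c) :
    update f 0 0 ∈ WbarSet k (k - c) := by
  obtain ⟨hfin, hneg, hadj, hodd⟩ := hf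
  refine ⟨hfin.subset fun x hx => ?_, fun i hi => ?_, fun i hi => ?_, ?_, fun i hi => ?_⟩
  · rcases eq_or_ne x 0 with rfl | hx0
    · simp at hx
    · rwa [mem_support, update_of_ne hx0] at hx
  · rcases hi.lt_or_eq with hi | rfl
    · rw [update_of_ne hi.ne]
      exact hneg i hi
    · simp
  · rw [update_of_ne (by omega), update_of_ne (by omega)]
    exact hadj i (by omega)
  · have := hadj 0 le_rfl
    rw [update_of_ne one_ne_zero]
    simp only [zero_add] at this
    omega
  · rw [update_of_ne (by rintro rfl; exact Int.not_odd_iff_even.2 Even.zero hi)]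
    exact hodd i hi

lemma update_zero_mem_YSet {k c : ℕ} (hc : c ≤ k) {g : ℤ → ℕ} (hg : g ∈ WbarSet k (k - c)) :
    update g 0 c ∈ YSet k := by
  obtain ⟨hfin, hnonpos, hadj, hg1, hodd⟩ := hg
  refine ⟨(hfin.insert 0).subset fun x hx => ?_, fun i hi => ?_, fun i hi => ?_, fun i hi => ?_⟩
  · rcases eq_or_ne x 0 with rfl | hx0
    · exact Set.mem_insert _ _
    · rw [mem_support, update_of_ne hx0] at hx
      exact Set.mem_insert_of_mem _ hx
  · rw [update_of_ne hi.ne]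
    exact hnonpos i hi.le
  · rcases hi.lt_or_eq with hi | rfl
    · rw [update_of_ne (by omega), update_of_ne (by omega)]
      exact hadj i (by omega)
    · rw [zero_add, update_self, update_of_ne one_ne_zero]
      omega
  · rw [update_of_ne (by rintro rfl; exact Int.not_odd_iff_even.2 Even.zero hi)]
    exact hodd i hi

lemma GF_YSet_fiber {k c : ℕ} (hc : c ≤ k) :
    GF {f | f ∈ YSet k ∧ f 0 = c} = GF (WbarSet k (k - c)) := by
  refine GF_congr_of_bijOn (update · 0 0) (Set.InvOn.bijOn (f' := (update · 0 c)) ⟨?_, ?_⟩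
    (fun f ⟨hf, hf0⟩ => update_zero_mem_WbarSet hf hf0)
    (fun g hg => ⟨update_zero_mem_YSet hc hg, update_self ..⟩)) fun f _ => weight_update_zero f 0
  · rintro f ⟨-, hf0⟩
    simp [← hf0]
  · intro g hg
    simp [← hg.2.1 0 le_rfl]

def zeroMult (j r l : ℕ) : ℕ := l + (l + r - j)

lemma zeroMult_strictMono (j r : ℕ) : StrictMono (zeroMult j r) := fun a b h => by
  unfold zeroMult
  omega

lemma YoSet_eq_biUnion (j r k : ℕ) :
    YoSet j r k = ⋃ l ∈ range (j + 1), {f | f ∈ YSet k ∧ f 0 = zeroMult j r l} := by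
  ext f
  simp only [YoSet, YSet, zeroMult, Set.mem_iUnion, Set.mem_ofPred_eq, mem_range, exists_prop]
  constructor
  · rintro ⟨hfin, hneg, hadj, ⟨l, hl, hf0⟩, hodd⟩
    exact ⟨l, by omega, ⟨hfin, hneg, hadj, hodd⟩, by omega⟩
  · rintro ⟨l, hl, ⟨hfin, hneg, hadj, hodd⟩, hf0⟩
    exact ⟨hfin, hneg, hadj, ⟨l, by omega, by omega⟩, hodd⟩

lemma prodSide_two_mul_div_two_eq {k a b : ℕ} (h : a + b = 2 * k + 5) :
    prodSide k (2 * (a / 2)) = prodSide k (2 * (b / 2)) := by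
  rw [show 2 * (b / 2) = 2 * k + 4 - 2 * (a / 2) by omega, prodSide, prodSide,
    Nat.sub_sub_self (by omega)]
  ring

-- For `l ≤ j - r` the argument is `k + 2 - l`: the terms `k + 2 + (j - r) - 2s` up to `k + 2`
-- are of this form, the larger ones after the reflection `a ↦ 2k + 5 - a` that fixes `g`.
-- For `l > j - r` the index is unchanged.
lemma sum_range_zeroMult_eq {M : Type*} [AddCommMonoid M] {j r k : ℕ} (hjr : j + r ≤ k)
    (g : ℕ → M) (hg : ∀ a b, a + b = 2 * k + 5 → g a = g b) :
    ∑ l ∈ range (j + 1), g (k - zeroMult j r l + 2)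
      = ∑ s ∈ range (j + 1), g (k + 2 - r + j - 2 * s) := by
  refine sum_nbij'
    (fun l => if j - r < l then l
      else if (j - r - l) % 2 = 1 then (j - r - l - 1) / 2 else (l + (j - r)) / 2)
    (fun s => if j - r < s then s
      else if 2 * s < j - r then j - r - (2 * s + 1) else 2 * s - (j - r))
    ?_ ?_ ?_ ?_ fun l hl => ?_
  all_goals simp only [mem_range] at *
  · intro l hl
    split_ifs <;> omega
  · intro s hs
    split_ifs <;> omega
  · intro l hl
    split_ifs <;> omega
  · intro s hs
    split_ifs <;> omega
  · unfold zeroMult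
    split_ifs
    · congr 1; omega
    · exact hg _ _ (by omega)
    · congr 1; omega

/-- Assuming the product formula for the generating functions of the sets `W̄_{k,c}`
(with exponent `e = 2⌊(c+2)/2⌋`), the generating function of `Y^o_{j,r,k}` equals
`Σ_{s=0}^{j} (-q²;q²)_∞ (q^{2⌊(k+2-r+j-2s)/2⌋}, q^{2k+4-2⌊(k+2-r+j-2s)/2⌋}, q^{2k+4};
q^{2k+4})_∞ / (q²;q²)_∞`. -/
theorem stmt15
    (hyp : ∀ k c : ℕ, c ≤ k → GF (WbarSet k c) = prodSide k (2*((c+2)/2)))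
    (j r k : ℕ) (hjr : j + r ≤ k) :
    GF (YoSet j r k)
      = ∑ s ∈ Finset.range (j+1), prodSide k (2*((k+2-r+j-2*s)/2)) := by
  have hfibre : ∀ l ∈ range (j + 1), GF {f | f ∈ YSet k ∧ f 0 = zeroMult j r l}
      = prodSide k (2 * ((k - zeroMult j r l + 2) / 2)) := fun l hl => by
    have hle : zeroMult j r l ≤ k := by
      simp only [zeroMult, mem_range] at hl ⊢
      omega
    rw [GF_YSet_fiber hle, hyp _ _ (Nat.sub_le _ _)]
  have hdisj : ((range (j + 1) : Finset ℕ) : Set ℕ).PairwiseDisjoint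
      fun l => {f | f ∈ YSet k ∧ f 0 = zeroMult j r l} :=
    fun l _ l' _ hll' => Set.disjoint_left.2 fun f hf hf' =>
      hll' ((zeroMult_strictMono j r).injective (hf.2.symm.trans hf'.2))
  rw [YoSet_eq_biUnion, GF_biUnion _ _ hdisj fun l _ => finite_weight_slice_YSet_fiber k _,
    sum_congr rfl hfibre]
  exact sum_range_zeroMult_eq hjr _ fun a b h => prodSide_two_mul_div_two_eq h
end
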